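/- The Cantor function c satisfies c(x) ≤ x^α for every x ∈ [0,1], where α = log 2 / log 3. -/
import Mathlib

noncomputable def modCont (f : ℝ → ℝ) (a b : ℝ) (δ : ℝ) : ℝ :=
  sSup {d : ℝ | ∃ x ∈ Set.Icc a b, ∃ y ∈ Set.Icc a b, |x - y| ≤ δ ∧ d = |f x - f y|}

def AbsolutelyContinuousOn (g : ℝ → ℝ) (a b : ℝ) : Prop :=
  ∀ ε > (0:ℝ), ∃ δ > (0:ℝ), ∀ n : ℕ, ∀ x y : ℕ → ℝ,
    (∀ i < n, a ≤ x i ∧ x i ≤ y i ∧ y i ≤ b) →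
    (∀ i < n, ∀ j < n, i ≠ j → Disjoint (Set.Ioo (x i) (y i)) (Set.Ioo (x j) (y j))) →
    (∑ i ∈ Finset.range n, (y i - x i)) < δ →
    (∑ i ∈ Finset.range n, |g (y i) - g (x i)|) < ε

/-- The standard Cantor function is the unique monotone function on `[0,1]` with
`c 0 = 0`, `c 1 = 1`, satisfying the self-similarity relations
`c (x/3) = c x / 2` and `c ((x+2)/3) = (1 + c x)/2`. -/
def IsCantorFunction (c : ℝ → ℝ) : Prop :=
  MonotoneOn c (Set.Icc 0 1) ∧ c 0 = 0 ∧ c 1 = 1 ∧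
  (∀ x ∈ Set.Icc (0:ℝ) 1, c (x / 3) = c x / 2) ∧
  (∀ x ∈ Set.Icc (0:ℝ) 1, c ((x + 2) / 3) = (1 + c x) / 2)

noncomputable def cantorAlpha : ℝ := Real.log 2 / Real.log 3

private lemma alpha_pos : (0:ℝ) < Real.log 2 / Real.log 3 := by
  apply div_pos <;> [exact Real.log_pos (by norm_num); exact Real.log_pos (by norm_num)]

private lemma alpha_le_one : Real.log 2 / Real.log 3 ≤ 1 := by
  rw [div_le_one (Real.log_pos (by norm_num))]
  exact Real.log_le_log (by norm_num) (by norm_num)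

private lemma three_rpow : (3:ℝ) ^ (Real.log 2 / Real.log 3) = 2 := by
  have : Real.log 2 / Real.log 3 = Real.logb 3 2 := rfl
  rw [this, Real.rpow_logb (by norm_num) (by norm_num) (by norm_num)]

private lemma key_ineq (z : ℝ) (hz0 : 0 ≤ z) (hz1 : z ≤ 1) :
    1 + z ^ (Real.log 2 / Real.log 3) ≤ (z + 2) ^ (Real.log 2 / Real.log 3) := by
  set α := Real.log 2 / Real.log 3 with hα
  have hcc := Real.concaveOn_rpow alpha_pos.le alpha_le_one
  have h3z : (0:ℝ) < 3 - z := by linarith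
  have ha1 : (0:ℝ) ≤ 2 / (3 - z) := by positivity
  have ha2 : (0:ℝ) ≤ (1 - z) / (3 - z) := by
    apply div_nonneg <;> linarith
  have hab : 2 / (3 - z) + (1 - z) / (3 - z) = 1 := by field_simp; ring
  have hab' : (1 - z) / (3 - z) + 2 / (3 - z) = 1 := by linarith
  have h1 := hcc.2 (Set.mem_Ici.2 hz0) (Set.mem_Ici.2 (by norm_num : (0:ℝ) ≤ 3))
    ha1 ha2 hab
  have h2 := hcc.2 (Set.mem_Ici.2 hz0) (Set.mem_Ici.2 (by norm_num : (0:ℝ) ≤ 3))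
    ha2 ha1 hab'
  simp only [smul_eq_mul] at h1 h2
  have e1 : 2 / (3 - z) * z + (1 - z) / (3 - z) * 3 = 1 := by field_simp; ring
  have e2 : (1 - z) / (3 - z) * z + 2 / (3 - z) * 3 = z + 2 := by field_simp; ring
  rw [e1, Real.one_rpow] at h1
  rw [e2] at h2
  rw [three_rpow] at h1 h2
  have hsum : 2 / (3 - z) * z ^ α + (1 - z) / (3 - z) * z ^ α = z ^ α := by
    rw [← add_mul, hab, one_mul]
  linarith

theorem stmt4 (c : ℝ → ℝ) (hc : IsCantorFunction c) :
    ∀ x ∈ Set.Icc (0:ℝ) 1, c x ≤ x ^ (Real.log 2 / Real.log 3) := by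
  set α := Real.log 2 / Real.log 3 with hα
  obtain ⟨hmono, h0, h1, hthird, htwothird⟩ := hc
  have step : ∀ n : ℕ, ∀ x ∈ Set.Icc (0:ℝ) 1, c x ≤ x ^ α + (1/2:ℝ)^n := by
    intro n
    induction n with
    | zero =>
      intro x hx
      have : c x ≤ c 1 := hmono hx (by norm_num) hx.2
      have hxa : 0 ≤ x ^ α := Real.rpow_nonneg hx.1 α
      simp only [pow_zero]
      linarith [this, h1.le, hxa, h1 ▸ this]
    | succ n ih =>
      intro x hx
      obtain ⟨hx0, hx1⟩ := hx
      rcases le_or_gt x (1/3) with hle | hgt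
      · -- x ∈ [0, 1/3]
        have hz : (3*x) ∈ Set.Icc (0:ℝ) 1 := ⟨by linarith, by linarith⟩
        have heq := hthird (3*x) hz
        have hx3 : (3*x)/3 = x := by ring
        rw [hx3] at heq
        have hzb := ih (3*x) hz
        have hmul : (3*x) ^ α = 2 * x ^ α := by
          rw [Real.mul_rpow (by norm_num) hx0, three_rpow]
        rw [hmul] at hzb
        have : (1/2:ℝ)^(n+1) = (1/2)^n / 2 := by rw [pow_succ]; ring
        rw [heq, this]
        linarith
      rcases le_or_gt x (2/3) with hle2 | hgt2
      · -- x ∈ (1/3, 2/3]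
        have hcx : c x ≤ c (2/3) := hmono ⟨hx0, hx1⟩ (by norm_num) hle2
        have heq := htwothird 0 (by norm_num)
        rw [h0] at heq
        norm_num at heq
        have h13 : ((1:ℝ)/3) ^ α = 1/2 := by
          rw [Real.div_rpow (by norm_num) (by norm_num), Real.one_rpow, three_rpow]
        have hle3 : ((1:ℝ)/3) ^ α ≤ x ^ α :=
          Real.rpow_le_rpow (by norm_num) hgt.le alpha_pos.le
        have hpow : (0:ℝ) ≤ (1/2:ℝ)^(n+1) := by positivity
        rw [heq] at hcx
        rw [h13] at hle3
        linarith
      · -- x ∈ (2/3, 1]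
        have hz : (3*x - 2) ∈ Set.Icc (0:ℝ) 1 := ⟨by linarith, by linarith⟩
        have heq := htwothird (3*x - 2) hz
        have hx3 : ((3*x - 2) + 2)/3 = x := by ring
        rw [hx3] at heq
        have hzb := ih (3*x - 2) hz
        have hkey := key_ineq (3*x - 2) hz.1 hz.2
        have hmul : ((3*x - 2) + 2) ^ α = 2 * x ^ α := by
          have : (3*x - 2) + 2 = 3 * x := by ring
          rw [this, Real.mul_rpow (by norm_num) hx0, three_rpow]
        rw [hmul] at hkey
        have : (1/2:ℝ)^(n+1) = (1/2)^n / 2 := by rw [pow_succ]; ring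
        rw [heq, this]
        linarith
  intro x hx
  refine le_of_forall_pos_le_add fun ε hε => ?_
  obtain ⟨n, hn⟩ := exists_pow_lt_of_lt_one hε (by norm_num : (1/2:ℝ) < 1)
  have := step n x hx
  linarith
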